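/- arXiv:1807.10103 — 3 statements merged into one kernel-verified Lean document; each statement's English description precedes it below -/
import Mathlib

section
/- In a finite STG with total transition relation, every state can reach at least one attractor, i.e., for every x ∈ S there exists an attractor A and a ∈ A reachable from x. -/
/-- In a finite STG with total transition relation, every state can reach at
least one attractor. -/
theorem exists_reachable_attractor {S : Type*} [Fintype S] (r : S → S → Prop)
    (htotal : ∀ x, ∃ y, r x y) (x : S) :
    ∃ A : Set S, A.Nonempty ∧
      (∀ u ∈ A, ∀ v ∈ A, Relation.ReflTransGen r u v) ∧
      (∀ u ∈ A, ∀ v, r u v → v ∈ A) ∧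
      ∃ a ∈ A, Relation.ReflTransGen r x a := by
  classical
  -- f a = number of states reachable from a
  set f : S → ℕ := fun a => (Set.toFinite {c | Relation.ReflTransGen r a c}).toFinset.card
    with hf
  obtain ⟨a, ha, hmin⟩ := Finset.exists_min_image
    (Set.toFinite {a | Relation.ReflTransGen r x a}).toFinset f
    ⟨x, by rw [Set.Finite.mem_toFinset]; exact Relation.ReflTransGen.refl⟩
  rw [Set.Finite.mem_toFinset] at ha
  -- a is reachable from x and minimizes f; show every b reachable from a reaches a back
  have key : ∀ b, Relation.ReflTransGen r a b → Relation.ReflTransGen r b a := by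
    intro b hab
    by_contra hba
    have hsub : (Set.toFinite {c | Relation.ReflTransGen r b c}).toFinset ⊆
        (Set.toFinite {c | Relation.ReflTransGen r a c}).toFinset := by
      intro c hc
      rw [Set.Finite.mem_toFinset] at *
      exact hab.trans hc
    have hlt : f b < f a := by
      apply Finset.card_lt_card
      refine ⟨hsub, ?_⟩
      intro h
      have := h (by rw [Set.Finite.mem_toFinset]; exact Relation.ReflTransGen.refl :
        a ∈ (Set.toFinite {c | Relation.ReflTransGen r a c}).toFinset)
      rw [Set.Finite.mem_toFinset] at this
      exact hba this
    have hb : b ∈ (Set.toFinite {a | Relation.ReflTransGen r x a}).toFinset := by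
      rw [Set.Finite.mem_toFinset]; exact ha.trans hab
    exact absurd (hmin b hb) (not_le.mpr hlt)
  refine ⟨{c | Relation.ReflTransGen r a c}, ⟨a, Relation.ReflTransGen.refl⟩, ?_, ?_, ?_⟩
  · intro u hu v hv
    exact (key u hu).trans hv
  · intro u hu v huv
    exact hu.trans (Relation.ReflTransGen.single huv)
  · exact ⟨a, Relation.ReflTransGen.refl, ha⟩
end

section
/- A state x belongs to ComSet(I) if and only if x ∈ ⋂_{i∈I} WeakBasin(a_i) and x ∈ StrongBasin({a_j | j ∈ I}), assuming A_1,…,A_k are all attractors of the STG. -/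
private lemma exists_sink {S : Type*} [Fintype S] (r : S → S → Prop) (y : S) :
    ∃ z, Relation.ReflTransGen r y z ∧
      ∀ w, Relation.ReflTransGen r z w → Relation.ReflTransGen r w z := by
  classical
  obtain ⟨z, hzT, hzmin⟩ :=
    (Finset.univ.filter (fun w => Relation.ReflTransGen r y w)).exists_min_image
      (fun z => (Finset.univ.filter (fun u => Relation.ReflTransGen r z u)).card)
      ⟨y, by simp only [Finset.mem_filter, Finset.mem_univ, true_and]; exact .refl⟩
  simp only [Finset.mem_filter, Finset.mem_univ, true_and] at hzT
  refine ⟨z, hzT, fun w hzw => ?_⟩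
  by_contra hwz
  have hsub : (Finset.univ.filter (fun u => Relation.ReflTransGen r w u)) ⊂
      (Finset.univ.filter (fun u => Relation.ReflTransGen r z u)) := by
    constructor
    · intro u hu
      simp only [Finset.mem_filter, Finset.mem_univ, true_and] at hu ⊢
      exact hzw.trans hu
    · intro hsub'
      have := hsub' (by simp only [Finset.mem_filter, Finset.mem_univ, true_and]; exact .refl : z ∈ _)
      simp only [Finset.mem_filter, Finset.mem_univ, true_and] at this
      exact hwz this
  have hcard := Finset.card_lt_card hsub
  have := hzmin w (by
    simp only [Finset.mem_filter, Finset.mem_univ, true_and]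
    exact hzT.trans hzw)
  omega

private lemma closed_rtg {S : Type*} {r : S → S → Prop} {B : Set S}
    (hB : ∀ x ∈ B, ∀ y, r x y → y ∈ B) {x y : S} (hx : x ∈ B)
    (h : Relation.ReflTransGen r x y) : y ∈ B := by
  induction h with
  | refl => exact hx
  | tail _ h2 ih => exact hB _ ih _ h2

/-- A state belongs to `ComSet(I)` iff it lies in `⋂_{i∈I} WeakBasin(aᵢ)` and in
`StrongBasin({aⱼ | j ∈ I})`, assuming `A₁,…,A_k` are all attractors of the STG. -/
theorem comSet_iff_weak_and_strong {S : Type*} [Fintype S] (r : S → S → Prop)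
    (htotal : ∀ x, ∃ y, r x y)
    (k : ℕ) (A : Fin k → Set S) (a : Fin k → S)
    (hne : ∀ i, (A i).Nonempty)
    (hconn : ∀ i, ∀ x ∈ A i, ∀ y ∈ A i, Relation.ReflTransGen r x y)
    (hclosed : ∀ i, ∀ x ∈ A i, ∀ y, r x y → y ∈ A i)
    (ha : ∀ i, a i ∈ A i)
    (hdistinct : ∀ i j, i ≠ j → A i ≠ A j)
    (hall : ∀ B : Set S, B.Nonempty →
      (∀ x ∈ B, ∀ y ∈ B, Relation.ReflTransGen r x y) →
      (∀ x ∈ B, ∀ y, r x y → y ∈ B) → ∃ i, B = A i)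
    (I : Finset (Fin k)) (hI : I.Nonempty) (x : S) :
    (∀ i, Relation.ReflTransGen r x (a i) ↔ i ∈ I) ↔
      ((∀ i ∈ I, Relation.ReflTransGen r x (a i)) ∧
       (∀ y, Relation.ReflTransGen r x y →
         ∃ j ∈ I, Relation.ReflTransGen r y (a j))) := by
  constructor
  · intro h
    refine ⟨fun i hi => (h i).2 hi, fun y hxy => ?_⟩
    obtain ⟨z, hyz, hsink⟩ := exists_sink r y
    set B : Set S := {w | Relation.ReflTransGen r z w} with hB
    have hBne : B.Nonempty := ⟨z, Relation.ReflTransGen.refl⟩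
    have hBconn : ∀ u ∈ B, ∀ v ∈ B, Relation.ReflTransGen r u v :=
      fun u hu v hv => (hsink u hu).trans hv
    have hBclosed : ∀ u ∈ B, ∀ v, r u v → v ∈ B :=
      fun u hu v huv => hu.tail huv
    obtain ⟨i, hBA⟩ := hall B hBne hBconn hBclosed
    have hzA : z ∈ A i := hBA ▸ (Relation.ReflTransGen.refl : z ∈ B)
    have hza : Relation.ReflTransGen r z (a i) := hconn i z hzA (a i) (ha i)
    have hxa : Relation.ReflTransGen r x (a i) := (hxy.trans hyz).trans hza
    exact ⟨i, (h i).1 hxa, hyz.trans hza⟩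
  · rintro ⟨hweak, hstrong⟩ i
    refine ⟨fun hxa => ?_, hweak i⟩
    obtain ⟨j, hj, haiaj⟩ := hstrong (a i) hxa
    have hajAi : a j ∈ A i := closed_rtg (hclosed i) (ha i) haiaj
    by_cases hij : i = j
    · exact hij ▸ hj
    · exfalso
      apply hdistinct i j hij
      ext u
      constructor
      · intro hu
        exact closed_rtg (hclosed j) (ha j) (hconn i (a j) hajAi u hu)
      · intro hu
        exact closed_rtg (hclosed i) hajAi (hconn j (a j) (ha j) u hu)
end

section
/- In a deterministic STG (every state has exactly one successor), the weak, strong and cycle-free basins of an attractor coincide: WeakBasin(a) = StrongBasin(a) = CycFreeBasin(A) for any attractor A and a ∈ A. -/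
/-- In a deterministic finite STG the weak, strong and cycle-free basins of an
attractor coincide. -/
theorem deterministic_basins_eq {S : Type*} [Fintype S] (r : S → S → Prop)
    (hdet : ∀ x, ∃! y, r x y)
    (A : Set S) (hne : A.Nonempty)
    (hconn : ∀ x ∈ A, ∀ y ∈ A, Relation.ReflTransGen r x y)
    (hclosed : ∀ x ∈ A, ∀ y, r x y → y ∈ A)
    (a : S) (ha : a ∈ A) :
    {x | Relation.ReflTransGen r x a} =
      {x | ∀ y, Relation.ReflTransGen r x y → Relation.ReflTransGen r y a} ∧
    {x | ∀ y, Relation.ReflTransGen r x y → Relation.ReflTransGen r y a} =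
      {x | ∀ π : ℕ → S, π 0 = x → (∀ n, r (π n) (π (n + 1))) → ∃ n, π n ∈ A} := by
  classical
  set f : S → S := fun x => (hdet x).choose with hfdef
  have hfr : ∀ x, r x (f x) := fun x => (hdet x).choose_spec.1
  have huniq : ∀ x y, r x y → y = f x := fun x y h => (hdet x).choose_spec.2 y h
  -- reachability iff iterate
  have reach_iff : ∀ x y, Relation.ReflTransGen r x y ↔ ∃ n, f^[n] x = y := by
    intro x y
    constructor
    · intro h
      induction h with
      | refl => exact ⟨0, rfl⟩
      | tail _ hbc ih =>
        obtain ⟨n, rfl⟩ := ih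
        exact ⟨n + 1, by rw [Function.iterate_succ_apply', huniq _ _ hbc]⟩
    · rintro ⟨n, rfl⟩
      induction n with
      | zero => exact Relation.ReflTransGen.refl
      | succ n ih =>
        rw [Function.iterate_succ_apply']
        exact ih.tail (hfr _)
  have hAiter : ∀ x ∈ A, ∀ n, f^[n] x ∈ A := by
    intro x hx n
    induction n with
    | zero => exact hx
    | succ n ih =>
      rw [Function.iterate_succ_apply']
      exact hclosed _ ih _ (hfr _)
  have h1 : {x | Relation.ReflTransGen r x a} =
      {x | ∀ y, Relation.ReflTransGen r x y → Relation.ReflTransGen r y a} := by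
    ext x
    simp only [Set.mem_setOf_eq]
    constructor
    · intro hxa y hxy
      obtain ⟨n, hn⟩ := (reach_iff x a).1 hxa
      obtain ⟨m, hm⟩ := (reach_iff x y).1 hxy
      rcases le_or_gt m n with hle | hlt
      · refine (reach_iff y a).2 ⟨n - m, ?_⟩
        rw [← hm, ← Function.iterate_add_apply, Nat.sub_add_cancel hle, hn]
      · have hya : y = f^[m - n] a := by
          rw [← hn, ← Function.iterate_add_apply, Nat.sub_add_cancel hlt.le, hm]
        have hyA : y ∈ A := hya ▸ hAiter a ha (m - n)
        exact hconn y hyA a ha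
    · intro h
      exact h x Relation.ReflTransGen.refl
  refine ⟨h1, ?_⟩
  ext x
  simp only [Set.mem_setOf_eq]
  constructor
  · intro h π hπ0 hπ
    have hπn : ∀ n, π n = f^[n] x := by
      intro n
      induction n with
      | zero => exact hπ0
      | succ n ih =>
        rw [Function.iterate_succ_apply', ← ih]
        exact huniq _ _ (hπ n)
    obtain ⟨n, hn⟩ := (reach_iff x a).1 (h x Relation.ReflTransGen.refl)
    exact ⟨n, by rw [hπn n, hn]; exact ha⟩
  · intro h
    have hx : Relation.ReflTransGen r x a := by
      obtain ⟨n, hn⟩ := h (fun n => f^[n] x) rfl (by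
        intro n
        show r (f^[n] x) (f^[n + 1] x)
        rw [Function.iterate_succ_apply']
        exact hfr _)
      exact ((reach_iff x _).2 ⟨n, rfl⟩).trans (hconn _ hn a ha)
    have hxmem : x ∈ {x | Relation.ReflTransGen r x a} := hx
    rw [h1] at hxmem
    exact hxmem
end
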